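/- (Orthogonal Procrustes, square case) Let Y, A ∈ ℝ^{n×n} and suppose YAᵀ has singular value decomposition YAᵀ = RΣWᵀ with R, W orthogonal and Σ diagonal with nonnegative entries. Then V* = RWᵀ maximizes tr(VᵀYAᵀ) over all orthogonal matrices V ∈ ℝ^{n×n}, and hence minimizes ‖Y − VA‖_F² over orthogonal V. -/
import Mathlib


open Matrix

/-- Squared Frobenius norm of a matrix. -/
def frobSq {m n : Type*} [Fintype m] [Fintype n] (X : Matrix m n ℝ) : ℝ :=
  ∑ i, ∑ j, (X i j) ^ 2

lemma frobSq_eq_trace {m : ℕ} (X : Matrix (Fin m) (Fin m) ℝ) :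
    frobSq X = (Xᵀ * X).trace := by
  simp [frobSq, Matrix.trace, Matrix.mul_apply, Matrix.diag, sq]
  rw [Finset.sum_comm]

lemma diag_le_one {m : ℕ} (M : Matrix (Fin m) (Fin m) ℝ) (h : Mᵀ * M = 1)
    (i : Fin m) : M i i ≤ 1 := by
  have h1 : ∑ k, M k i * M k i = 1 := by
    have := congrFun (congrFun h i) i
    simpa [Matrix.mul_apply, Matrix.one_apply] using this
  have h2 : M i i * M i i ≤ 1 := by
    rw [← h1]
    exact Finset.single_le_sum (fun k _ => mul_self_nonneg (M k i))
      (Finset.mem_univ i)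
  nlinarith

lemma trace_bound {m : ℕ} (R W S : Matrix (Fin m) (Fin m) ℝ)
    (hR : Rᵀ * R = 1) (hW : Wᵀ * W = 1)
    (hSdiag : ∀ i j, i ≠ j → S i j = 0) (hSnonneg : ∀ i, 0 ≤ S i i)
    (V : Matrix (Fin m) (Fin m) ℝ) (hV : Vᵀ * V = 1) :
    (Vᵀ * (R * S * Wᵀ)).trace ≤ S.trace := by
  set M := Wᵀ * Vᵀ * R with hM
  have hMo : Mᵀ * M = 1 := by
    have hW' : W * Wᵀ = 1 := mul_eq_one_comm.mp hW
    have hV'' : V * Vᵀ = 1 := mul_eq_one_comm.mp hV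
    calc Mᵀ * M = Rᵀ * (V * (W * Wᵀ) * Vᵀ) * R := by
          simp [hM, Matrix.transpose_mul, Matrix.mul_assoc]
      _ = 1 := by rw [hW']; simp [hV'', hR]
  have key : (Vᵀ * (R * S * Wᵀ)).trace = (M * S).trace := by
    rw [hM]
    rw [show Vᵀ * (R * S * Wᵀ) = (Vᵀ * R * S) * Wᵀ by
      simp [Matrix.mul_assoc]]
    rw [Matrix.trace_mul_comm]
    simp [Matrix.mul_assoc]
  rw [key]
  have hd : (M * S).trace = ∑ i, M i i * S i i := by
    unfold Matrix.trace
    apply Finset.sum_congr rfl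
    intro i _
    simp only [Matrix.diag, Matrix.mul_apply]
    rw [Finset.sum_eq_single i]
    · intro j _ hj; rw [hSdiag j i hj, mul_zero]
    · intro h; exact absurd (Finset.mem_univ i) h
  rw [hd]
  have : S.trace = ∑ i, S i i := rfl
  rw [this]
  apply Finset.sum_le_sum
  intro i _
  have := diag_le_one M hMo i
  nlinarith [hSnonneg i]

theorem orthogonal_procrustes {n : ℕ}
    (Y A R W S : Matrix (Fin n) (Fin n) ℝ)
    (hR : Rᵀ * R = 1) (hW : Wᵀ * W = 1)
    (hSdiag : ∀ i j, i ≠ j → S i j = 0) (hSnonneg : ∀ i, 0 ≤ S i i)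
    (hSVD : Y * Aᵀ = R * S * Wᵀ) :
    ∀ V : Matrix (Fin n) (Fin n) ℝ, Vᵀ * V = 1 →
      (Vᵀ * (Y * Aᵀ)).trace ≤ ((R * Wᵀ)ᵀ * (Y * Aᵀ)).trace ∧
      frobSq (Y - (R * Wᵀ) * A) ≤ frobSq (Y - V * A) := by
  intro V hV
  have hRW : (R * Wᵀ)ᵀ * (R * Wᵀ) = 1 := by
    have hR' : R * Rᵀ = 1 := mul_eq_one_comm.mp hR
    calc (R * Wᵀ)ᵀ * (R * Wᵀ) = W * (Rᵀ * R) * Wᵀ := by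
          simp [Matrix.transpose_mul, Matrix.mul_assoc]
      _ = 1 := by rw [hR]; simpa using mul_eq_one_comm.mp hW
  -- value at the optimizer: trace S
  have hopt : ((R * Wᵀ)ᵀ * (Y * Aᵀ)).trace = S.trace := by
    rw [hSVD]
    have : (R * Wᵀ)ᵀ * (R * S * Wᵀ) = W * S * Wᵀ := by
      calc (R * Wᵀ)ᵀ * (R * S * Wᵀ) = W * ((Rᵀ * R) * S) * Wᵀ := by
            simp [Matrix.transpose_mul, Matrix.mul_assoc]
        _ = W * S * Wᵀ := by rw [hR]; simp
    rw [this, Matrix.trace_mul_comm, ← Matrix.mul_assoc, hW, Matrix.one_mul]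
  have htr : (Vᵀ * (Y * Aᵀ)).trace ≤ ((R * Wᵀ)ᵀ * (Y * Aᵀ)).trace := by
    rw [hopt, hSVD]
    exact trace_bound R W S hR hW hSdiag hSnonneg V hV
  refine ⟨htr, ?_⟩
  -- expand Frobenius norms
  have expand : ∀ U : Matrix (Fin n) (Fin n) ℝ, Uᵀ * U = 1 →
      frobSq (Y - U * A) =
        (Yᵀ * Y).trace + (Aᵀ * A).trace - 2 * (Uᵀ * (Y * Aᵀ)).trace := by
    intro U hU
    rw [frobSq_eq_trace]
    have h1 : (Y - U * A)ᵀ * (Y - U * A)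
        = Yᵀ * Y - Yᵀ * (U * A) - (Aᵀ * Uᵀ) * Y + Aᵀ * (Uᵀ * U) * A := by
      simp [Matrix.sub_mul, Matrix.mul_sub, Matrix.transpose_mul,
        Matrix.mul_assoc]
      abel
    rw [h1, hU]
    simp only [Matrix.trace_add, Matrix.trace_sub, Matrix.mul_one,
      Matrix.one_mul]
    have h2 : (Yᵀ * (U * A)).trace = (Uᵀ * (Y * Aᵀ)).trace := by
      rw [← Matrix.trace_transpose (Yᵀ * (U * A))]
      simp only [Matrix.transpose_mul, Matrix.transpose_transpose]
      rw [Matrix.trace_mul_comm (Aᵀ * Uᵀ) Y, ← Matrix.mul_assoc,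
        Matrix.trace_mul_comm (Y * Aᵀ) Uᵀ]
    have h3 : ((Aᵀ * Uᵀ) * Y).trace = (Uᵀ * (Y * Aᵀ)).trace := by
      rw [Matrix.trace_mul_comm (Aᵀ * Uᵀ) Y, ← Matrix.mul_assoc,
        Matrix.trace_mul_comm (Y * Aᵀ) Uᵀ]
    rw [h2, h3]
    ring
  rw [expand (R * Wᵀ) hRW, expand V hV]
  linarith
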